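/- The diagonal matrix of the permuted product code operator family and its distance: Let F_q be a finite field of characteristic p and γ ∈ F_q^*. For i ≥ 0 define G_i : F_q[X,Y] → F_q[X,Y] by G_i(q)(X,Y) = q(X + i, γ^i·Y) (where X + i means X plus the image of the integer i in F_q). Then: (a) for all a, b ≥ 0, the coefficient of X^aY^b in G_i(X^aY^b) equals γ^{i·b}; (b) if γ has multiplicative order at least k and 1 ≤ w, then for every nonzero u = (u_0,…,u_{w−1}) ∈ F_q^w, the number of pairs (a,b) with a ∈ {0,…,t−1}, b ∈ {0,…,k−1} such that Σ_{i=0}^{w−1} u_i·γ^{i·b} = 0 is at most (w−1)·t. In particular, the matrix Diag(𝓖) ∈ F_q^{w×(tk)} with entry γ^{i·b} in position (i, ak+b) generates a code of minimum distance at least tk − (w−1)t. -/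

import Mathlib

/-!
`G_i` maps `X^a Y^b` to `(X + i)^a (γ^i Y)^b`, whose top coefficient is `γ^{ib}`. For part (b),
`Σ_i u_i γ^{ib}` is the value at `γ^b` of the polynomial `P_u = Σ_i u_i Z^i`, which is nonzero of
degree `< w`. Since `b ↦ γ^b` is injective on `b < k ≤ ord γ`, at most `w - 1` of the `b` are roots
of `P_u`, and each of them accounts for `t` pairs `(a, b)`.
-/

open MvPolynomial

noncomputable section

/-- The permuted product code operator `G_i : q(X,Y) ↦ q(X + i, γ^i·Y)`. -/
def gOp (F : Type) [Field F] (γ : F) (i : ℕ) :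
    MvPolynomial (Fin 2) F → MvPolynomial (Fin 2) F :=
  fun p => MvPolynomial.aeval ![X 0 + C ((i : ℕ) : F), C (γ ^ i) * X 1] p

theorem MvPolynomial.coeff_single_X_add_C_pow {σ R : Type*} [CommSemiring R]
    (i : σ) (c : R) (a : ℕ) :
    coeff (Finsupp.single i a) ((X i + C c) ^ a) = 1 := by
  classical
  rw [add_pow, coeff_sum, Finset.sum_eq_single a]
  · simp [X_pow_eq_monomial, coeff_monomial]
  · intro m _ hma
    rw [← C_pow, ← map_natCast C, mul_assoc, ← C_mul, X_pow_eq_monomial, mul_comm,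
      coeff_C_mul, coeff_monomial, if_neg ((Finsupp.single_injective i).ne hma), mul_zero]
  · simp

theorem MvPolynomial.coeff_X_add_C_pow_mul_C_mul_X_pow {σ R : Type*} [CommSemiring R]
    (i j : σ) (c m : R) (a b : ℕ) :
    coeff (Finsupp.single i a + Finsupp.single j b) ((X i + C c) ^ a * (C m * X j) ^ b) =
      m ^ b := by
  rw [mul_pow, ← C_pow, X_pow_eq_monomial, C_mul_monomial, mul_one, coeff_mul_monomial',
    if_pos le_add_self, add_tsub_cancel_right, coeff_single_X_add_C_pow, one_mul]

theorem Polynomial.eval_ofFn {R : Type*} [CommSemiring R] [DecidableEq R] {n : ℕ}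
    (v : Fin n → R) (x : R) :
    (Polynomial.ofFn n v).eval x = ∑ i : Fin n, v i * x ^ (i : ℕ) := by
  simp [Polynomial.ofFn_eq_sum_monomial, Polynomial.eval_finsetSum]

theorem Polynomial.ncard_isRoot_pow_le {R : Type*} [CommRing R] [IsDomain R] {P : Polynomial R}
    (hP : P ≠ 0) {γ : R} {k : ℕ} (hk : k ≤ orderOf γ) :
    {b : Fin k | P.IsRoot (γ ^ (b : ℕ))}.ncard ≤ P.natDegree := by
  classical
  calc {b : Fin k | P.IsRoot (γ ^ (b : ℕ))}.ncard ≤ (P.roots.toFinset : Set R).ncard := by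
        refine Set.ncard_le_ncard_of_injOn (fun b => γ ^ (b : ℕ)) ?_ ?_ (Finset.finite_toSet _)
        · intro b hb
          simpa [hP] using hb
        · intro b₁ _ b₂ _ h
          exact Fin.ext (pow_injOn_Iio_orderOf (by simpa using b₁.2.trans_le hk)
            (by simpa using b₂.2.trans_le hk) h)
    _ ≤ P.natDegree := by
        rw [Set.ncard_coe_finset]
        exact (Multiset.toFinset_card_le _).trans (Polynomial.card_roots' P)

theorem coeff_gOp_X_pow_mul_X_pow {F : Type} [Field F] (γ : F) (i a b : ℕ) :
    coeff (Finsupp.single 0 a + Finsupp.single 1 b) (gOp F γ i (X 0 ^ a * X 1 ^ b)) =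
      γ ^ (i * b) := by
  simp only [gOp, map_mul, map_pow, aeval_X, Matrix.cons_val_zero, Matrix.cons_val_one]
  rw [← C_pow, coeff_X_add_C_pow_mul_C_mul_X_pow, pow_mul]

theorem ppc_diag_matrix_distance_general
    {F : Type} [Field F] {w t k : ℕ}
    (γ : F) :
    (∀ a b i : ℕ,
      MvPolynomial.coeff (Finsupp.single 0 a + Finsupp.single 1 b)
        (gOp F γ i (X 0 ^ a * X 1 ^ b)) = γ ^ (i * b)) ∧
    (k ≤ orderOf γ → 1 ≤ w →
      ∀ u : Fin w → F, u ≠ 0 →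
        {ab : Fin t × Fin k |
          (∑ i : Fin w, u i * γ ^ ((i : ℕ) * (ab.2 : ℕ))) = 0}.ncard
          ≤ (w - 1) * t) := by
  refine ⟨fun a b i => coeff_gOp_X_pow_mul_X_pow γ i a b, fun hk hw u hu => ?_⟩
  classical
  set P := Polynomial.ofFn w u
  have hP : P ≠ 0 := fun h => hu (Polynomial.injective_ofFn w (h.trans (map_zero _).symm))
  have hset : {ab : Fin t × Fin k | (∑ i : Fin w, u i * γ ^ ((i : ℕ) * (ab.2 : ℕ))) = 0} =
      Set.univ ×ˢ {b : Fin k | P.IsRoot (γ ^ (b : ℕ))} := by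
    ext ⟨a, b⟩
    simp [P, Polynomial.eval_ofFn, pow_mul']
  calc _ = t * {b : Fin k | P.IsRoot (γ ^ (b : ℕ))}.ncard := by
        rw [hset, Set.ncard_prod, Set.ncard_univ, Nat.card_eq_fintype_card, Fintype.card_fin]
    _ ≤ t * P.natDegree := Nat.mul_le_mul_left _ (P.ncard_isRoot_pow_le hP hk)
    _ ≤ t * (w - 1) :=
        Nat.mul_le_mul_left _ (Nat.le_pred_of_lt (Polynomial.ofFn_natDegree_lt hw u))
    _ = (w - 1) * t := Nat.mul_comm _ _

/-- The diagonal matrix of the permuted product code operator family and its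
distance: (a) the coefficient of `X^a Y^b` in `G_i(X^a Y^b)` is `γ^{i·b}`;
(b) if `γ` has multiplicative order at least `k`, then for every nonzero
`u ∈ F_q^w` the number of pairs `(a,b)` with `Σ_i u_i γ^{i·b} = 0` is at most
`(w-1)·t`; so `Diag(𝓖)` generates a code of minimum distance at least
`tk - (w-1)t`. -/
theorem ppc_diag_matrix_distance
    {F : Type} [Field F] [Fintype F] {pc w t k : ℕ}
    (hchar : CharP F pc) (hpp : pc.Prime)
    (γ : F) (hγ : γ ≠ 0) :
    (∀ a b i : ℕ,
      MvPolynomial.coeff (Finsupp.single 0 a + Finsupp.single 1 b)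
        (gOp F γ i (X 0 ^ a * X 1 ^ b)) = γ ^ (i * b)) ∧
    (k ≤ orderOf γ → 1 ≤ w →
      ∀ u : Fin w → F, u ≠ 0 →
        {ab : Fin t × Fin k |
          (∑ i : Fin w, u i * γ ^ ((i : ℕ) * (ab.2 : ℕ))) = 0}.ncard
          ≤ (w - 1) * t) :=
  ppc_diag_matrix_distance_general γ
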